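/- arXiv:1212.1471 — 2 statements merged into one kernel-verified Lean document; each statement's English description precedes it below -/
import Mathlib

section
/- Let d be a function on S_n × S_n satisfying: (1) d is a metric, (2) d is left-invariant, (3) d(π,σ) = d(π,ω) + d(ω,σ) if and only if ω is between π and σ, and (4) the smallest positive distance is 1. Then for any permutation γ, d(γ, e) equals the minimum number of adjacent transpositions needed to transform γ into the identity e. -/
open Equiv Finset

/-- The adjacent transposition swapping positions `i` and `i+1` (0-indexed);
identity if out of range. -/
def adjSwap (n i : ℕ) : Equiv.Perm (Fin n) :=
  if h : i + 1 < n then Equiv.swap ⟨i, Nat.lt_of_succ_lt h⟩ ⟨i + 1, h⟩ else 1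

/-- `ω` is between `π` and `σ`: on every pair `{a,b}`, `ω` agrees with `π` or with `σ`. -/
def Between {n : ℕ} (π ω σ : Equiv.Perm (Fin n)) : Prop :=
  ∀ a b : Fin n, (π⁻¹ a < π⁻¹ b ↔ ω⁻¹ a < ω⁻¹ b) ∨ (σ⁻¹ a < σ⁻¹ b ↔ ω⁻¹ a < ω⁻¹ b)

/-- Kendall tau distance: minimum number of adjacent transpositions transforming `π` into `σ`. -/
noncomputable def kendall {n : ℕ} (π σ : Equiv.Perm (Fin n)) : ℕ :=
  sInf {s | ∃ l : List ℕ, (∀ i ∈ l, i + 1 < n) ∧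
    σ = π * (l.map (adjSwap n)).prod ∧ l.length = s}

/-- The set of inversions between `π` and `σ` (each unordered pair `{i,j}` of disagreement
is recorded as the ordered pair `(i,j)` with `i` ranked before `j` by `π`). -/
def invSet {n : ℕ} (π σ : Equiv.Perm (Fin n)) : Finset (Fin n × Fin n) :=
  Finset.univ.filter fun p => π⁻¹ p.1 < π⁻¹ p.2 ∧ σ⁻¹ p.2 < σ⁻¹ p.1

/-- Elements `j` on whose relative order with `i` the permutations `π` and `σ` disagree. -/
def invWith {n : ℕ} (π σ : Equiv.Perm (Fin n)) (i : Fin n) : Finset (Fin n) :=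
  Finset.univ.filter fun j => ¬(π⁻¹ i < π⁻¹ j ↔ σ⁻¹ i < σ⁻¹ j)

/-- Weighted Kendall distance for weight function `φ` on adjacent transpositions
(`φ h` is the weight of swapping positions `h, h+1`, 0-indexed). -/
noncomputable def wKendall {n : ℕ} (φ : ℕ → ℝ) (π σ : Equiv.Perm (Fin n)) : ℝ :=
  sInf {w | ∃ l : List ℕ, (∀ i ∈ l, i + 1 < n) ∧
    σ = π * (l.map (adjSwap n)).prod ∧ (l.map φ).sum = w}

/-- `w(k:l)`: sum of adjacent-transposition weights between positions `min k l` and `max k l - 1`. -/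
def wsum (φ : ℕ → ℝ) (k l : ℕ) : ℝ := ∑ h ∈ Finset.Ico (min k l) (max k l), φ h

/-- The generalized (weighted) Spearman footrule `D_φ`. -/
noncomputable def DKendall {n : ℕ} (φ : ℕ → ℝ) (π σ : Equiv.Perm (Fin n)) : ℝ :=
  ∑ i : Fin n, wsum φ ((π⁻¹ i : Fin n) : ℕ) ((σ⁻¹ i : Fin n) : ℕ)

/-- Weighted transposition distance with weight function `φ` on transpositions. -/
noncomputable def wTrans {n : ℕ} (φ : Fin n → Fin n → ℝ) (π σ : Equiv.Perm (Fin n)) : ℝ :=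
  sInf {w | ∃ l : List (Fin n × Fin n), (∀ p ∈ l, p.1 ≠ p.2) ∧
    σ = π * (l.map fun p => Equiv.swap p.1 p.2).prod ∧
    (l.map fun p => φ p.1 p.2).sum = w}

/-- Weight of a path (as a list of vertices) in the complete graph `K_φ`. -/
def pathWt {n : ℕ} (φ : Fin n → Fin n → ℝ) (p : List (Fin n)) : ℝ :=
  ((p.zip p.tail).map fun q => φ q.1 q.2).sum

/-- `p` is a path from `a` to `b` (consecutive vertices distinct). -/
def IsPath {n : ℕ} (p : List (Fin n)) (a b : Fin n) : Prop :=
  p.head? = some a ∧ p.getLast? = some b ∧ p.Chain' (· ≠ ·)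

/-- Minimum weight of a path from `a` to `b` in `K_φ`. -/
noncomputable def minPathWt {n : ℕ} (φ : Fin n → Fin n → ℝ) (a b : Fin n) : ℝ :=
  sInf {w | ∃ p : List (Fin n), IsPath p a b ∧ pathWt φ p = w}

/-- The footrule-type lower/upper bounding function `D_φ` for transposition weights. -/
noncomputable def DTrans {n : ℕ} (φ : Fin n → Fin n → ℝ) (π σ : Equiv.Perm (Fin n)) : ℝ :=
  ∑ i : Fin n, minPathWt φ (π⁻¹ i) (σ⁻¹ i)

/-!
Left invariance reduces everything to `γ ↦ d 1 γ`. If `γ` has a descent at `i`, then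
`γ * s_i` lies between `1` and `γ`, so `d 1 γ = d 1 (γ * s_i) + d 1 s_i`. Along the two reduced
words of the braid relation `s_i s_{i+1} s_i = s_{i+1} s_i s_{i+1}` this forces all `d 1 s_i`
to be equal, and since the minimal positive distance `1` is attained they all equal `1`.
Peeling off descents then writes `γ` as a word of length `d 1 γ`, while the triangle inequality
bounds `d 1 γ` by the length of every word for `γ`.
-/

section

variable {n : ℕ}

lemma adjSwap_mul_self (i : ℕ) : adjSwap n i * adjSwap n i = 1 := by
  unfold adjSwap; split_ifs <;> simp

lemma adjSwap_inv (i : ℕ) : (adjSwap n i)⁻¹ = adjSwap n i :=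
  inv_eq_of_mul_eq_one_right (adjSwap_mul_self i)

lemma val_adjSwap {i : ℕ} (h : i + 1 < n) (x : Fin n) :
    ((adjSwap n i x : Fin n) : ℕ) =
      if (x : ℕ) = i then i + 1 else if (x : ℕ) = i + 1 then i else x := by
  rw [adjSwap, dif_pos h, Equiv.swap_apply_def]
  split_ifs <;> simp_all [Fin.ext_iff]

lemma adjSwap_ne_one {i : ℕ} (h : i + 1 < n) : adjSwap n i ≠ 1 := by
  intro h1
  have := congrArg Fin.val (Perm.ext_iff.mp h1 ⟨i, by omega⟩)
  simp [val_adjSwap h] at this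

lemma adjSwap_lt_adjSwap_iff {i : ℕ} (h : i + 1 < n) {x y : Fin n}
    (hxy : ¬((x : ℕ) = i ∧ (y : ℕ) = i + 1)) (hyx : ¬((x : ℕ) = i + 1 ∧ (y : ℕ) = i)) :
    adjSwap n i x < adjSwap n i y ↔ x < y := by
  rw [Fin.lt_def, Fin.lt_def, val_adjSwap h, val_adjSwap h]
  split_ifs <;> omega

lemma adjSwap_braid {i : ℕ} (h : i + 2 < n) :
    adjSwap n i * adjSwap n (i + 1) * adjSwap n i =
      adjSwap n (i + 1) * adjSwap n i * adjSwap n (i + 1) := by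
  ext x
  simp only [Perm.mul_apply, val_adjSwap (show i + 1 < n by omega), val_adjSwap h]
  split_ifs <;> omega

/-- At a descent `i` of `γ`, right multiplication by `adjSwap n i` only undoes the inversion
of the pair `{γ i, γ (i + 1)}`. -/
lemma between_one_mul_adjSwap {γ : Perm (Fin n)} {i : ℕ} (h : i + 1 < n)
    (hd : γ ⟨i + 1, h⟩ < γ ⟨i, by omega⟩) : Between 1 (γ * adjSwap n i) γ := by
  intro a b
  obtain ⟨x, rfl⟩ := γ.surjective a
  obtain ⟨y, rfl⟩ := γ.surjective b
  simp only [inv_one, Perm.one_apply, mul_inv_rev, adjSwap_inv, Perm.mul_apply,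
    Perm.coe_inv, Equiv.symm_apply_apply]
  by_cases hxy : (x : ℕ) = i ∧ (y : ℕ) = i + 1
  · obtain ⟨rfl, rfl⟩ : x = ⟨i, Nat.lt_of_succ_lt h⟩ ∧ y = ⟨i + 1, h⟩ := by
      simp [Fin.ext_iff, hxy]
    refine Or.inl (iff_of_false (not_lt.mpr hd.le) ?_)
    rw [Fin.lt_def, val_adjSwap h, val_adjSwap h]
    simp
  by_cases hyx : (x : ℕ) = i + 1 ∧ (y : ℕ) = i
  · obtain ⟨rfl, rfl⟩ : x = ⟨i + 1, h⟩ ∧ y = ⟨i, Nat.lt_of_succ_lt h⟩ := by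
      simp [Fin.ext_iff, hyx]
    refine Or.inl (iff_of_true hd ?_)
    rw [Fin.lt_def, val_adjSwap h, val_adjSwap h]
    simp
  exact Or.inr (adjSwap_lt_adjSwap_iff h hxy hyx).symm

lemma exists_descent_of_ne_one {γ : Perm (Fin n)} (hγ : γ ≠ 1) :
    ∃ i, ∃ h : i + 1 < n, γ ⟨i + 1, h⟩ < γ ⟨i, by omega⟩ := by
  contrapose! hγ
  have mono : StrictMono γ := by
    cases n with
    | zero => exact fun x => x.elim0
    | succ m =>
      refine Fin.strictMono_iff_lt_succ.mpr fun i => (hγ i (by omega)).lt_of_ne ?_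
      exact γ.injective.ne (by simp [Fin.ext_iff])
  exact Perm.ext fun x => le_antisymm mono.apply_le mono.le_apply

section Metric

variable {d : Perm (Fin n) → Perm (Fin n) → ℝ}

lemma dist_one_inv (h_symm : ∀ π σ, d π σ = d σ π)
    (h_linv : ∀ η π σ, d (η * π) (η * σ) = d π σ) (γ : Perm (Fin n)) :
    d 1 γ⁻¹ = d 1 γ := by
  rw [← h_linv γ, mul_one, mul_inv_cancel, h_symm]

lemma dist_one_eq_add_of_descent (h_linv : ∀ η π σ, d (η * π) (η * σ) = d π σ)
    (h_between : ∀ π σ ω, Between π ω σ → d π σ = d π ω + d ω σ)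
    {γ : Perm (Fin n)} {i : ℕ} (h : i + 1 < n) (hd : γ ⟨i + 1, h⟩ < γ ⟨i, by omega⟩) :
    d 1 γ = d 1 (γ * adjSwap n i) + d 1 (adjSwap n i) := by
  have step := h_linv (γ * adjSwap n i) 1 (adjSwap n i)
  rw [mul_one, mul_assoc, adjSwap_mul_self, mul_one] at step
  rw [h_between _ _ _ (between_one_mul_adjSwap h hd), step]

/-- Both sides of the braid relation are reduced words, so `d 1 ·` adds up along each. -/
lemma dist_one_adjSwap_succ (h_linv : ∀ η π σ, d (η * π) (η * σ) = d π σ)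
    (h_between : ∀ π σ ω, Between π ω σ → d π σ = d π ω + d ω σ)
    {i : ℕ} (h : i + 2 < n) : d 1 (adjSwap n i) = d 1 (adjSwap n (i + 1)) := by
  have h₁ : i + 1 < n := by omega
  have h₂ : i + 1 + 1 < n := h
  have descent := fun {γ : Perm (Fin n)} {j : ℕ} (hj : j + 1 < n) hd =>
    dist_one_eq_add_of_descent h_linv h_between (γ := γ) hj hd
  have lhs : d 1 (adjSwap n i * adjSwap n (i + 1) * adjSwap n i) =
      d 1 (adjSwap n i) + d 1 (adjSwap n (i + 1)) + d 1 (adjSwap n i) := by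
    rw [descent h₁, mul_assoc _ (adjSwap n i), adjSwap_mul_self, mul_one, descent h₂,
      mul_assoc, adjSwap_mul_self, mul_one]
    all_goals simp only [Fin.lt_def, Perm.mul_apply, val_adjSwap h₁, val_adjSwap h₂]
    all_goals split_ifs <;> omega
  have rhs : d 1 (adjSwap n (i + 1) * adjSwap n i * adjSwap n (i + 1)) =
      d 1 (adjSwap n (i + 1)) + d 1 (adjSwap n i) + d 1 (adjSwap n (i + 1)) := by
    rw [descent h₂, mul_assoc _ (adjSwap n (i + 1)), adjSwap_mul_self, mul_one, descent h₁,
      mul_assoc, adjSwap_mul_self, mul_one]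
    all_goals simp only [Fin.lt_def, Perm.mul_apply, val_adjSwap h₁, val_adjSwap h₂]
    all_goals split_ifs <;> omega
  rw [adjSwap_braid h, rhs] at lhs
  linarith

lemma dist_one_adjSwap_eq_dist_one_adjSwap_zero
    (h_linv : ∀ η π σ, d (η * π) (η * σ) = d π σ)
    (h_between : ∀ π σ ω, Between π ω σ → d π σ = d π ω + d ω σ)
    {k : ℕ} (h : k + 1 < n) : d 1 (adjSwap n k) = d 1 (adjSwap n 0) := by
  induction k with
  | zero => rfl
  | succ k ih => exact (dist_one_adjSwap_succ h_linv h_between h).symm.trans (ih (by omega))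

lemma one_le_dist_one_adjSwap (h_nonneg : ∀ π σ, 0 ≤ d π σ) (h_eq : ∀ π σ, d π σ = 0 → π = σ)
    (h_min : ∀ π σ, 0 < d π σ → 1 ≤ d π σ) {i : ℕ} (h : i + 1 < n) :
    1 ≤ d 1 (adjSwap n i) :=
  h_min _ _ <| (h_nonneg _ _).lt_of_ne fun h0 => adjSwap_ne_one h (h_eq _ _ h0.symm).symm

lemma dist_one_adjSwap_eq_one (h_nonneg : ∀ π σ, 0 ≤ d π σ) (h_eq : ∀ π σ, d π σ = 0 ↔ π = σ)
    (h_linv : ∀ η π σ, d (η * π) (η * σ) = d π σ)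
    (h_between : ∀ π σ ω, Between π ω σ → d π σ = d π ω + d ω σ)
    (h_min : ∀ π σ, 0 < d π σ → 1 ≤ d π σ) (h_min1 : ∃ π σ, d π σ = 1)
    {i : ℕ} (h : i + 1 < n) : d 1 (adjSwap n i) = 1 := by
  obtain ⟨π, σ, hπσ⟩ := h_min1
  have hβ : d 1 (π⁻¹ * σ) = 1 := by rw [← h_linv π, mul_one, mul_inv_cancel_left, hπσ]
  have hne : π⁻¹ * σ ≠ 1 := by
    rintro h1
    rw [h1, (h_eq 1 1).mpr rfl] at hβ
    exact zero_ne_one hβ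
  obtain ⟨j, hj, hd⟩ := exists_descent_of_ne_one hne
  have hsplit := dist_one_eq_add_of_descent h_linv h_between hj hd
  have hj1 : d 1 (adjSwap n j) = 1 := by
    linarith [h_nonneg 1 (π⁻¹ * σ * adjSwap n j),
      one_le_dist_one_adjSwap h_nonneg (fun π σ => (h_eq π σ).mp) h_min hj]
  rw [dist_one_adjSwap_eq_dist_one_adjSwap_zero h_linv h_between h,
    ← dist_one_adjSwap_eq_dist_one_adjSwap_zero h_linv h_between hj, hj1]

lemma dist_one_prod_le (h_self : ∀ π, d π π = 0)
    (h_tri : ∀ π σ ω, d π σ ≤ d π ω + d ω σ) (h_linv : ∀ η π σ, d (η * π) (η * σ) = d π σ)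
    (h_unit : ∀ i, i + 1 < n → d 1 (adjSwap n i) = 1)
    (l : List ℕ) (hl : ∀ i ∈ l, i + 1 < n) : d 1 (l.map (adjSwap n)).prod ≤ l.length := by
  induction l with
  | nil => simp [h_self]
  | cons i l ih =>
    have hl' := List.forall_mem_cons.mp hl
    have step := h_linv (adjSwap n i) 1 (l.map (adjSwap n)).prod
    rw [mul_one] at step
    calc d 1 (adjSwap n i * (l.map (adjSwap n)).prod)
        ≤ d 1 (adjSwap n i) + d 1 (l.map (adjSwap n)).prod := step ▸ h_tri _ _ _
      _ ≤ 1 + l.length := by rw [h_unit i hl'.1]; linarith [ih hl'.2]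
      _ = (i :: l).length := by push_cast [List.length_cons]; ring

lemma exists_word_length_eq_dist (h_nonneg : ∀ π σ, 0 ≤ d π σ)
    (h_self : ∀ π, d π π = 0) (h_linv : ∀ η π σ, d (η * π) (η * σ) = d π σ)
    (h_between : ∀ π σ ω, Between π ω σ → d π σ = d π ω + d ω σ)
    (h_unit : ∀ i, i + 1 < n → d 1 (adjSwap n i) = 1) (γ : Perm (Fin n)) :
    ∃ l : List ℕ, (∀ i ∈ l, i + 1 < n) ∧ γ = (l.map (adjSwap n)).prod ∧
      (l.length : ℝ) = d 1 γ := by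
  obtain ⟨N, hN⟩ := exists_nat_gt (d 1 γ)
  induction N generalizing γ with
  | zero => exact absurd hN (not_lt.mpr (mod_cast h_nonneg 1 γ))
  | succ N ih =>
    by_cases hγ : γ = 1
    · exact ⟨[], by simp, by simp [hγ], by simp [hγ, h_self]⟩
    obtain ⟨i, hi, hd⟩ := exists_descent_of_ne_one hγ
    have hsplit := dist_one_eq_add_of_descent h_linv h_between hi hd
    rw [h_unit i hi] at hsplit
    obtain ⟨l, hl, hprod, hlen⟩ := ih (γ * adjSwap n i) (by push_cast at hN; linarith)
    refine ⟨l ++ [i], ?_, ?_, ?_⟩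
    · simpa [or_imp, forall_and] using ⟨hl, hi⟩
    · rw [List.map_append, List.prod_append, ← hprod]
      simp [mul_assoc, adjSwap_mul_self]
    · rw [List.length_append, List.length_singleton]
      push_cast
      linarith

end Metric

end

theorem stmt1 (n : ℕ) (d : Equiv.Perm (Fin n) → Equiv.Perm (Fin n) → ℝ)
    (h_nonneg : ∀ π σ, 0 ≤ d π σ)
    (h_eq : ∀ π σ, d π σ = 0 ↔ π = σ)
    (h_symm : ∀ π σ, d π σ = d σ π)
    (h_tri : ∀ π σ ω, d π σ ≤ d π ω + d ω σ)
    (h_linv : ∀ η π σ, d (η * π) (η * σ) = d π σ)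
    (h_line : ∀ π σ ω : Equiv.Perm (Fin n), d π σ = d π ω + d ω σ ↔ Between π ω σ)
    (h_min : ∀ π σ, 0 < d π σ → 1 ≤ d π σ)
    (h_min1 : ∃ π σ : Equiv.Perm (Fin n), d π σ = 1)
    (γ : Equiv.Perm (Fin n)) :
    d γ 1 = (kendall γ 1 : ℝ) := by
  have h_self π : d π π = 0 := (h_eq π π).mpr rfl
  have h_between π σ ω (h : Between π ω σ) := (h_line π σ ω).mpr h
  have h_unit i (hi : i + 1 < n) :=
    dist_one_adjSwap_eq_one h_nonneg h_eq h_linv h_between h_min h_min1 hi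
  obtain ⟨l, hl, hprod, hlen⟩ :=
    exists_word_length_eq_dist h_nonneg h_self h_linv h_between h_unit γ⁻¹
  have hleast : IsLeast {s | ∃ l : List ℕ, (∀ i ∈ l, i + 1 < n) ∧
      1 = γ * (l.map (adjSwap n)).prod ∧ l.length = s} l.length := by
    refine ⟨⟨l, hl, by rw [← hprod, mul_inv_cancel], rfl⟩, ?_⟩
    rintro _ ⟨l', hl', hγl', rfl⟩
    have hl'_prod := dist_one_prod_le h_self h_tri h_linv h_unit l' hl'
    rw [eq_inv_of_mul_eq_one_right hγl'.symm, ← hlen] at hl'_prod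
    exact_mod_cast hl'_prod
  rw [kendall, hleast.csInf_eq, hlen, dist_one_inv h_symm h_linv, h_symm]
end

section
/- For any weighted Kendall distance d_φ with nonnegative weight function φ on adjacent transpositions, and for all π, σ ∈ S_n: (1/2)·D_φ(π,σ) ≤ d_φ(π,σ) ≤ D_φ(π,σ), where D_φ(π,σ) = Σ_{i=1}^{n} w(π⁻¹(i) : σ⁻¹(i)) and w(k:l) is the sum of weights φ((h, h+1)) for h ranging over the positions between min(k,l) and max(k,l)-1 (and 0 if k = l). -/
open Equiv Finset

/-! With nonnegative weights `w(k:l) = |Φ k - Φ l|` for the prefix sums `Φ` of `φ`, so the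
footrule `D_φ` satisfies the triangle inequality, and it is left-invariant; since
`D_φ(π, π s_h) = 2 φ(h)` for the adjacent transposition `s_h`, following any word of adjacent
transpositions from `π` to `σ` gives `D_φ(π, σ) ≤ 2 d_φ(π, σ)`.

Conversely, sort `τ = π⁻¹σ` from the top. If `m` is the largest position moved by `τ`, then
`b = τ⁻¹ m` and `c = τ m` lie below `m`, and `τ (b m) = (c m) τ` fixes `m` and everything above
it while having footrule smaller by `w(c:m) + w(b:m) - w(b:c) = 2 w(max b c : m)`.
The transposition `(max b c, m)` is a word of weight at most `2 w(max b c : m)` in adjacent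
transpositions; it goes on the right of `τ (b m)` if `max b c = b` and on the left if it is `c`.
-/

section Wsum

variable (φ : ℕ → ℝ)

lemma wsum_self (k : ℕ) : wsum φ k k = 0 := by
  simp [wsum]

lemma wsum_comm (k l : ℕ) : wsum φ k l = wsum φ l k := by
  rw [wsum, wsum, min_comm, max_comm]

lemma wsum_of_le {k l : ℕ} (h : k ≤ l) : wsum φ k l = ∑ h ∈ Ico k l, φ h := by
  rw [wsum, min_eq_left h, max_eq_right h]

lemma wsum_add {a b c : ℕ} (hab : a ≤ b) (hbc : b ≤ c) :
    wsum φ a c = wsum φ a b + wsum φ b c := by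
  rw [wsum_of_le φ (hab.trans hbc), wsum_of_le φ hab, wsum_of_le φ hbc,
    sum_Ico_consecutive _ hab hbc]

lemma wsum_succ (k : ℕ) : wsum φ k (k + 1) = φ k := by
  rw [wsum_of_le φ k.le_succ, Nat.Ico_succ_singleton, sum_singleton]

variable {φ}

lemma wsum_eq_abs_sub (hφ : ∀ i, 0 ≤ φ i) (k l : ℕ) :
    wsum φ k l = |∑ h ∈ range k, φ h - ∑ h ∈ range l, φ h| := by
  wlog hkl : k ≤ l generalizing k l
  · rw [wsum_comm, abs_sub_comm]
    exact this l k (le_of_not_ge hkl)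
  rw [wsum_of_le φ hkl, sum_Ico_eq_sub _ hkl, abs_sub_comm,
    abs_of_nonneg (sub_nonneg.2 (sum_le_sum_of_subset_of_nonneg (range_subset_range.2 hkl)
      fun i _ _ => hφ i))]

lemma wsum_triangle (hφ : ∀ i, 0 ≤ φ i) (a b c : ℕ) :
    wsum φ a c ≤ wsum φ a b + wsum φ b c := by
  simp only [wsum_eq_abs_sub hφ]
  exact abs_sub_le _ _ _

end Wsum

lemma Finset.sum_sub_sum_eq_of_eq_off_pair {ι M : Type*} [Fintype ι] [DecidableEq ι]
    [AddCommGroup M] {f g : ι → M} {x y : ι} (hxy : x ≠ y)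
    (h : ∀ i, i ≠ x → i ≠ y → f i = g i) :
    ∑ i, f i - ∑ i, g i = (f x - g x) + (f y - g y) := by
  have hcompl : ∑ i ∈ {x, y}ᶜ, f i = ∑ i ∈ {x, y}ᶜ, g i :=
    sum_congr rfl fun i hi => by
      simp only [mem_compl, mem_insert, mem_singleton, not_or] at hi
      exact h i hi.1 hi.2
  rw [← sum_add_sum_compl {x, y} f, ← sum_add_sum_compl {x, y} g, sum_pair hxy, sum_pair hxy,
    hcompl]
  abel

section Footrule

variable {n : ℕ} {φ : ℕ → ℝ}

lemma adjSwap_of_lt {i : ℕ} (h : i + 1 < n) :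
    adjSwap n i = swap ⟨i, Nat.lt_of_succ_lt h⟩ ⟨i + 1, h⟩ :=
  dif_pos h

lemma DKendall_self (π : Perm (Fin n)) : DKendall φ π π = 0 := by
  simp [DKendall, wsum_self]

lemma DKendall_mul_left (ρ π σ : Perm (Fin n)) :
    DKendall φ (ρ * π) (ρ * σ) = DKendall φ π σ := by
  simp only [DKendall, mul_inv_rev, Perm.mul_apply]
  exact sum_comp ρ⁻¹ fun i => wsum φ ((π⁻¹ i : Fin n) : ℕ) ((σ⁻¹ i : Fin n) : ℕ)

lemma DKendall_eq_one_inv_mul (π σ : Perm (Fin n)) :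
    DKendall φ π σ = DKendall φ 1 (π⁻¹ * σ) := by
  rw [← DKendall_mul_left π⁻¹, inv_mul_cancel]

lemma DKendall_one_left (τ : Perm (Fin n)) :
    DKendall φ 1 τ = ∑ p, wsum φ (τ p : ℕ) p := by
  rw [DKendall, ← sum_comp τ]
  simp

lemma DKendall_triangle (hφ : ∀ i, 0 ≤ φ i) (π σ ρ : Perm (Fin n)) :
    DKendall φ π ρ ≤ DKendall φ π σ + DKendall φ σ ρ := by
  rw [DKendall, DKendall, DKendall, ← sum_add_distrib]
  exact sum_le_sum fun i _ => wsum_triangle hφ _ _ _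

lemma DKendall_mul_adjSwap {h : ℕ} (hh : h + 1 < n) (π : Perm (Fin n)) :
    DKendall φ π (π * adjSwap n h) = 2 * φ h := by
  have hne : (⟨h, Nat.lt_of_succ_lt hh⟩ : Fin n) ≠ ⟨h + 1, hh⟩ := by simp
  rw [DKendall_eq_one_inv_mul, inv_mul_cancel_left, DKendall_one_left, ← sub_zero (∑ p, _),
    ← sum_const_zero (s := (univ : Finset (Fin n))),
    sum_sub_sum_eq_of_eq_off_pair hne fun p hp₁ hp₂ => ?_]
  · simp only [adjSwap_of_lt hh, swap_apply_left, swap_apply_right, wsum_comm φ (h + 1),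
      wsum_succ, sub_zero]
    ring
  · rw [adjSwap_of_lt hh, swap_apply_of_ne_of_ne hp₁ hp₂, wsum_self]

lemma DKendall_mul_prod_le (hφ : ∀ i, 0 ≤ φ i) (π : Perm (Fin n)) (l : List ℕ)
    (hl : ∀ i ∈ l, i + 1 < n) :
    DKendall φ π (π * (l.map (adjSwap n)).prod) ≤ 2 * (l.map φ).sum := by
  induction l generalizing π with
  | nil => simp [DKendall_self]
  | cons h l ih =>
    have hh : h + 1 < n := hl h (by simp)
    have ih' := ih (π * adjSwap n h) fun i hi => hl i (by simp [hi])
    have htri := DKendall_triangle hφ π (π * adjSwap n h)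
      (π * adjSwap n h * (l.map (adjSwap n)).prod)
    simp only [List.map_cons, List.prod_cons, List.sum_cons, ← mul_assoc] at ih' htri ⊢
    rw [DKendall_mul_adjSwap hh] at htri
    linarith

lemma DKendall_one_eq_mul_swap (τ : Perm (Fin n)) {m : Fin n} (hm : τ m ≠ m) :
    DKendall φ 1 τ = DKendall φ 1 (τ * swap (τ⁻¹ m) m) +
      (wsum φ (τ m) m + wsum φ (τ⁻¹ m) m - wsum φ (τ m) (τ⁻¹ m)) := by
  have hbm : τ⁻¹ m ≠ m := fun h => hm (by simpa using congrArg τ h.symm)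
  rw [← sub_eq_iff_eq_add', DKendall_one_left, DKendall_one_left,
    sum_sub_sum_eq_of_eq_off_pair hbm fun p hp₁ hp₂ => by
      rw [Perm.mul_apply, swap_apply_of_ne_of_ne hp₁ hp₂]]
  simp only [Perm.coe_inv, apply_symm_apply, Perm.coe_mul, Function.comp_apply, swap_apply_left,
    swap_apply_right, wsum_comm φ m, wsum_self, sub_zero]
  ring

end Footrule

section AdjWord

variable {n : ℕ} {φ : ℕ → ℝ}

def HasAdjWord (n : ℕ) (φ : ℕ → ℝ) (τ : Perm (Fin n)) (c : ℝ) : Prop :=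
  ∃ l : List ℕ, (∀ i ∈ l, i + 1 < n) ∧ (l.map (adjSwap n)).prod = τ ∧
    (l.map φ).sum ≤ c

lemma HasAdjWord.one : HasAdjWord n φ 1 0 :=
  ⟨[], by simp, rfl, le_rfl⟩

lemma HasAdjWord.adjSwap {h : ℕ} (hh : h + 1 < n) : HasAdjWord n φ (adjSwap n h) (φ h) :=
  ⟨[h], by simpa using hh, by simp, by simp⟩

lemma HasAdjWord.mono {τ : Perm (Fin n)} {c d : ℝ} (hτ : HasAdjWord n φ τ c) (hcd : c ≤ d) :
    HasAdjWord n φ τ d :=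
  let ⟨l, hl, hprod, hcost⟩ := hτ
  ⟨l, hl, hprod, hcost.trans hcd⟩

lemma HasAdjWord.mul {τ ρ : Perm (Fin n)} {c d : ℝ} (hτ : HasAdjWord n φ τ c)
    (hρ : HasAdjWord n φ ρ d) : HasAdjWord n φ (τ * ρ) (c + d) := by
  obtain ⟨l, hl, rfl, hc⟩ := hτ
  obtain ⟨l', hl', rfl, hd⟩ := hρ
  refine ⟨l ++ l', fun i hi => ?_, by simp, ?_⟩
  · rcases List.mem_append.1 hi with hi | hi
    exacts [hl i hi, hl' i hi]
  · simp only [List.map_append, List.sum_append]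
    linarith

/-- `(a b)` is the conjugate of `(a b-1)` by the adjacent transposition `(b-1 b)`. -/
lemma hasAdjWord_swap (hφ : ∀ i, 0 ≤ φ i) {a b : Fin n} (hab : a < b) :
    HasAdjWord n φ (swap a b) (2 * wsum φ a b) := by
  obtain ⟨a, ha⟩ := a
  obtain ⟨b, hb⟩ := b
  replace hab : a < b := hab
  induction b, hab using Nat.le_induction with
  | base =>
    rw [← adjSwap_of_lt hb, wsum_succ]
    exact (HasAdjWord.adjSwap hb).mono (by linarith [hφ a])
  | succ b hab ih =>
    have hbn : b < n := Nat.lt_of_succ_lt hb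
    have hconj : adjSwap n b * swap ⟨a, by omega⟩ ⟨b, hbn⟩ * adjSwap n b =
        swap ⟨a, by omega⟩ ⟨b + 1, hb⟩ := by
      rw [adjSwap_of_lt hb, swap_mul_swap_mul_swap (Fin.ne_of_val_ne (by dsimp; omega))
        (Fin.ne_of_val_ne (by dsimp; omega)), swap_comm]
    rw [← hconj, wsum_add φ (by omega : a ≤ b) b.le_succ, wsum_succ]
    exact (((HasAdjWord.adjSwap hb).mul (ih hbn)).mul (HasAdjWord.adjSwap hb)).mono
      (by linarith)

lemma Equiv.Perm.apply_le_of_forall_lt_apply_eq {α : Type*} [LinearOrder α] {τ : Perm α}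
    {m : α} (hτ : ∀ x, m < x → τ x = x) {y : α} (hy : y ≤ m) : τ y ≤ m := by
  by_contra! h
  have := τ.injective (hτ (τ y) h)
  exact absurd (this ▸ h) hy.not_gt

lemma hasAdjWord_DKendall_of_mul_swap (hφ : ∀ i, 0 ≤ φ i) {τ : Perm (Fin n)} {m : Fin n}
    (hfix : ∀ x, m < x → τ x = x) (hm : τ m ≠ m)
    (h : HasAdjWord n φ (τ * swap (τ⁻¹ m) m) (DKendall φ 1 (τ * swap (τ⁻¹ m) m))) :
    HasAdjWord n φ τ (DKendall φ 1 τ) := by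
  have hc : τ m < m := lt_of_le_of_ne (τ.apply_le_of_forall_lt_apply_eq hfix le_rfl) hm
  have hb : τ⁻¹ m < m := by
    refine lt_of_le_of_ne (τ⁻¹.apply_le_of_forall_lt_apply_eq (fun x hx => ?_) le_rfl) ?_
    · rw [Perm.inv_eq_iff_eq, hfix x hx]
    · exact fun h => hm (by simpa using congrArg τ h.symm)
  have hD := DKendall_one_eq_mul_swap (φ := φ) τ hm
  rcases le_total (τ m : ℕ) (τ⁻¹ m) with hcb | hbc
  · have hτ : τ * swap (τ⁻¹ m) m * swap (τ⁻¹ m) m = τ := by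
      rw [mul_assoc, swap_mul_self, mul_one]
    have := h.mul (hasAdjWord_swap hφ hb)
    rw [hτ] at this
    exact this.mono (by linarith [wsum_add φ hcb hb.le])
  · have hτ : swap (τ m) m * (τ * swap (τ⁻¹ m) m) = τ := by
      rw [mul_swap_eq_swap_mul, Perm.coe_inv, apply_symm_apply, ← mul_assoc, swap_comm,
        swap_mul_self, one_mul]
    have := (hasAdjWord_swap hφ hc).mul h
    rw [hτ] at this
    exact this.mono (by linarith [wsum_add φ hbc hc.le, wsum_comm φ (τ m) (τ⁻¹ m)])

lemma hasAdjWord_DKendall (hφ : ∀ i, 0 ≤ φ i) (τ : Perm (Fin n)) :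
    HasAdjWord n φ τ (DKendall φ 1 τ) := by
  suffices H : ∀ k : ℕ, ∀ τ : Perm (Fin n), (∀ x : Fin n, k ≤ (x : ℕ) → τ x = x) →
      HasAdjWord n φ τ (DKendall φ 1 τ) from
    H n τ fun x hx => absurd x.isLt hx.not_gt
  intro k
  induction k with
  | zero =>
    intro τ hτ
    obtain rfl : τ = 1 := Equiv.ext fun x => hτ x (Nat.zero_le _)
    simpa [DKendall_self] using HasAdjWord.one
  | succ k ih =>
    intro τ hτ
    by_cases hk : k < n
    swap
    · exact ih τ fun x hx => absurd x.isLt (by omega)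
    set m : Fin n := ⟨k, hk⟩
    have hfix : ∀ x, m < x → τ x = x := fun x hx => hτ x hx
    by_cases hm : τ m = m
    · exact ih τ fun x hx =>
        (eq_or_lt_of_le hx).elim (fun h => (Fin.ext h : m = x) ▸ hm) (hτ x)
    refine hasAdjWord_DKendall_of_mul_swap hφ hfix hm (ih _ fun x hx => ?_)
    rcases eq_or_lt_of_le hx with h | h
    · obtain rfl : m = x := Fin.ext h
      simp
    · have hxm : m < x := h
      have hb : τ⁻¹ m ≠ x := fun hbx => hxm.ne (by rw [← hfix x hxm, ← hbx]; simp)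
      rw [Perm.mul_apply, swap_apply_of_ne_of_ne hb.symm hxm.ne', hfix x hxm]

end AdjWord

section WKendall

variable {n : ℕ} {φ : ℕ → ℝ}

lemma wKendall_le_of_hasAdjWord (hφ : ∀ i, 0 ≤ φ i) {π σ : Perm (Fin n)} {c : ℝ}
    (h : HasAdjWord n φ (π⁻¹ * σ) c) : wKendall φ π σ ≤ c := by
  obtain ⟨l, hl, hprod, hcost⟩ := h
  unfold wKendall
  refine le_trans (csInf_le ⟨0, ?_⟩ ?_) hcost
  · rintro _ ⟨l', -, -, rfl⟩
    exact List.sum_nonneg fun x hx => by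
      obtain ⟨i, -, rfl⟩ := List.mem_map.1 hx
      exact hφ i
  · exact ⟨l, hl, by rw [hprod, mul_inv_cancel_left], rfl⟩

lemma DKendall_le_two_mul_wKendall (hφ : ∀ i, 0 ≤ φ i) (π σ : Perm (Fin n)) :
    DKendall φ π σ ≤ 2 * wKendall φ π σ := by
  obtain ⟨l, hl, hprod, -⟩ := hasAdjWord_DKendall hφ (π⁻¹ * σ)
  rw [← div_le_iff₀' two_pos]
  unfold wKendall
  refine le_csInf ⟨_, l, hl, by rw [hprod, mul_inv_cancel_left], rfl⟩ ?_
  rintro _ ⟨l', hl', rfl, rfl⟩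
  rw [div_le_iff₀' two_pos]
  exact DKendall_mul_prod_le hφ π l' hl'

end WKendall

theorem stmt7 (n : ℕ) (φ : ℕ → ℝ) (hφ : ∀ i, 0 ≤ φ i) (π σ : Equiv.Perm (Fin n)) :
    (1 / 2) * DKendall φ π σ ≤ wKendall φ π σ ∧ wKendall φ π σ ≤ DKendall φ π σ := by
  refine ⟨by linarith [DKendall_le_two_mul_wKendall hφ π σ], ?_⟩
  rw [DKendall_eq_one_inv_mul]
  exact wKendall_le_of_hasAdjWord hφ (hasAdjWord_DKendall hφ _)
end
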